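/- Let u = (u_1,…,u_d) ∈ binom(ℕ,d). Then the Inc-image of the singleton {u} equals the union of {π_i(u)} over 1 ≤ i ≤ u_d+1; explicitly, Inc({u}) = {u, (u_1,…,u_{d-1},u_d+1), (u_1,…,u_{d-1}+1,u_d+1), …, (u_1,u_2+1,…,u_d+1), (u_1+1,u_2+1,…,u_d+1)}, i.e. it consists of the d-sets obtained from u by adding 1 to the last j coordinates for j = 0,1,…,d. -/

import Mathlib

def Inc1 : Set (ℕ → ℕ) := {π | StrictMono π ∧ ∀ j, π j ≤ j + 1}

def incF (F : Set (Finset ℕ)) : Set (Finset ℕ) :=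
  {v | ∃ u ∈ F, ∃ π ∈ Inc1, v = u.image π}

def compressionIn (A : Set ℕ) (d n : ℕ) : Set (Finset ℕ) :=
  {v | ↑v ⊆ A ∧ v.card = d ∧
    {w : Finset ℕ | ↑w ⊆ A ∧ w.card = d ∧ toColex w ≤ toColex v}.ncard ≤ n}

def IsCompressedIn (A : Set ℕ) (d : ℕ) (F : Set (Finset ℕ)) : Prop :=
  (∀ u ∈ F, ↑u ⊆ A ∧ u.card = d) ∧
  ∀ u ∈ F, ∀ v : Finset ℕ, ↑v ⊆ A → v.card = d → toColex v ≤ toColex u → v ∈ F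

def hatL (F : Set (Finset ℕ)) (k : ℕ) : Set (Finset ℕ) :=
  {u | (∀ x ∈ u, k < x) ∧ insert k u ∈ F}

def hatR (F : Set (Finset ℕ)) (k : ℕ) : Set (Finset ℕ) :=
  {u | (∀ x ∈ u, x < k) ∧ insert k u ∈ F}

def leftComp (d : ℕ) (F : Set (Finset ℕ)) : Set (Finset ℕ) :=
  ⋃ k : ℕ, {v | ∃ w ∈ compressionIn {j | k < j} (d - 1) (hatL F k).ncard, v = insert k w}

def rightComp (d : ℕ) (F : Set (Finset ℕ)) : Set (Finset ℕ) :=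
  ⋃ k : ℕ, {v | ∃ w ∈ compressionIn Set.univ (d - 1) (hatR F k).ncard, v = insert k w}

def BorelLE (u v : Finset ℕ) : Prop :=
  List.Forall₂ (· ≤ ·) (u.sort (· ≤ ·)) (v.sort (· ≤ ·))

def IsShifted (F : Set (Finset ℕ)) : Prop :=
  ∀ u ∈ F, ∀ v, BorelLE v u → v ∈ F

def piShift (i : ℕ) : ℕ → ℕ := fun j => if j < i then j else j + 1

def IsBinRep (d m s : ℕ) (a : ℕ → ℕ) : Prop :=
  1 ≤ s ∧ s ≤ d ∧ (∀ i, s ≤ i → i < d → a i < a (i + 1)) ∧ s ≤ a s ∧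
    m = ∑ i ∈ Finset.Icc s d, Nat.choose (a i) i

def famLE (F G : Set (Finset ℕ)) : Prop :=
  F = G ∨ ∃ m ∈ G, m ∉ F ∧
    ∀ w : Finset ℕ, (w ∈ F ∧ w ∉ G) ∨ (w ∈ G ∧ w ∉ F) → toColex w ≤ toColex m

def IsSimplicialComplex (Δ : Set (Finset ℕ)) : Prop :=
  Δ.Finite ∧ ∀ F ∈ Δ, ∀ G ⊆ F, G ∈ Δ

/-!
Since `j ≤ π j ≤ j + 1` for `π ∈ Inc1`, and strict monotonicity forces `π j = j + 1` for all `j`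
beyond the first point that `π` moves, every `π ∈ Inc1` is either the identity or some `π_i`.
On `u`, the identity and every `π_i` with `i > max u + 1` act as `π_{max u + 1}`.
-/

namespace Inc1

variable {π : ℕ → ℕ}

lemma apply_eq_or_eq_succ (hπ : π ∈ Inc1) (j : ℕ) : π j = j ∨ π j = j + 1 := by
  have := hπ.1.le_apply (x := j)
  have := hπ.2 j
  omega

lemma apply_eq_succ_of_le (hπ : π ∈ Inc1) {i j : ℕ} (hi : π i = i + 1) (hij : i ≤ j) :
    π j = j + 1 := by
  have := hπ.1.add_le_nat (j - i) i
  rw [Nat.sub_add_cancel hij] at this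
  have := hπ.2 j
  omega

lemma eq_id_or_eq_piShift (hπ : π ∈ Inc1) : π = id ∨ ∃ i, π = piShift i := by
  by_cases h : ∃ j, π j = j + 1
  · refine Or.inr ⟨Nat.find h, funext fun j => ?_⟩
    unfold piShift
    split_ifs with hj
    · exact (apply_eq_or_eq_succ hπ j).resolve_right (Nat.find_min h hj)
    · exact apply_eq_succ_of_le hπ (Nat.find_spec h) (not_lt.1 hj)
  · push Not at h
    exact Or.inl (funext fun j => (apply_eq_or_eq_succ hπ j).resolve_right (h j))

end Inc1

lemma piShift_mem_Inc1 (i : ℕ) : piShift i ∈ Inc1 := by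
  refine ⟨fun a b hab => ?_, fun j => ?_⟩ <;> unfold piShift <;> split_ifs <;> omega

lemma image_piShift_of_forall_lt {u : Finset ℕ} {i : ℕ} (h : ∀ x ∈ u, x < i) :
    u.image (piShift i) = u := by
  conv_rhs => rw [← Finset.image_id (s := u)]
  exact Finset.image_congr fun x hx => if_pos (h x hx)

lemma image_piShift_eq (u : Finset ℕ) (i : ℕ) :
    u.image (piShift i) = u.filter (fun x => x < i) ∪ (u.filter (fun x => i ≤ x)).image (· + 1) := by
  ext y
  simp only [Finset.mem_union, Finset.mem_filter, Finset.mem_image, piShift]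
  constructor
  · rintro ⟨x, hx, rfl⟩
    split_ifs with hxi
    · exact Or.inl ⟨hx, hxi⟩
    · exact Or.inr ⟨x, ⟨hx, not_lt.1 hxi⟩, rfl⟩
  · rintro (⟨hy, hyi⟩ | ⟨x, ⟨hx, hix⟩, rfl⟩)
    · exact ⟨y, hy, if_pos hyi⟩
    · exact ⟨x, hx, if_neg (not_lt.2 hix)⟩

theorem stmt5_general (u : Finset ℕ) (hne : u.Nonempty) :
    incF {u} = {v : Finset ℕ | ∃ i ≤ u.max' hne + 1, v = u.image (piShift i)} ∧
      ∀ i : ℕ, u.image (piShift i) =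
        u.filter (fun x => x < i) ∪ (u.filter (fun x => i ≤ x)).image (· + 1) := by
  refine ⟨?_, image_piShift_eq u⟩
  set M := u.max' hne
  have hlt : ∀ x ∈ u, x < M + 1 := fun x hx => Nat.lt_succ_of_le (u.le_max' x hx)
  ext v
  simp only [incF, Set.mem_ofPred_eq, Set.mem_singleton_iff, exists_eq_left]
  constructor
  · rintro ⟨π, hπ, rfl⟩
    obtain rfl | ⟨i, rfl⟩ := Inc1.eq_id_or_eq_piShift hπ
    · exact ⟨M + 1, le_rfl, by rw [Finset.image_id, image_piShift_of_forall_lt hlt]⟩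
    · rcases le_or_gt i (M + 1) with hi | hi
      · exact ⟨i, hi, rfl⟩
      · refine ⟨M + 1, le_rfl, ?_⟩
        rw [image_piShift_of_forall_lt hlt,
          image_piShift_of_forall_lt fun x hx => (hlt x hx).trans hi]
  · rintro ⟨i, -, rfl⟩
    exact ⟨piShift i, piShift_mem_Inc1 i, rfl⟩

theorem stmt5 (d : ℕ) (hd : 1 ≤ d) (u : Finset ℕ) (hu : u.card = d) (hne : u.Nonempty) :
    incF {u} = {v : Finset ℕ | ∃ i ≤ u.max' hne + 1, v = u.image (piShift i)} ∧
      ∀ i : ℕ, u.image (piShift i) =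
        u.filter (fun x => x < i) ∪ (u.filter (fun x => i ≤ x)).image (· + 1) :=
  stmt5_general u hne
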